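/- The measures R_N(z) d²z converge weakly to the circular law: for every continuous compactly supported function f : ℂ → ℝ, lim_{N→∞} ∫_ℂ f(z) R_N(z) d²z = π^{−1} ∫_{|z| ≤ 1} f(z) d²z, where d²z denotes Lebesgue measure on ℂ ≅ ℝ². -/

import Mathlib

/-! Writing `R_N(z) = π⁻¹ P(Poisson(N|z|²) < N)`, it suffices that this probability tends to `1`
inside and to `0` outside the unit circle. Comparing `(Nx)^n` with `x^N N^n` termwise bounds the
lower tail (for `x ≥ 1`) and the upper tail (for `x ≤ 1`) of the Poisson(`Nx`) law at `N` by
`e^{-Nx} x^N e^N = (x e^{1-x})^N`, and `x e^{1-x} < 1` for `x ≠ 1`. Dominated convergence, with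
`0 ≤ R_N ≤ π⁻¹` and a null unit circle, then gives the theorem. -/

open Filter MeasureTheory

/-- The one-point eigenvalue density of the `N × N` complex Ginibre ensemble. -/
noncomputable def ginibreOnePoint (N : ℕ) (z : ℂ) : ℝ :=
  Real.pi⁻¹ * Real.exp (-(N * ‖z‖ ^ 2)) *
    ∑ n ∈ Finset.range N, (N * ‖z‖ ^ 2) ^ n / (Nat.factorial n : ℝ)

open Real Finset Nat Topology

lemma Real.hasSum_pow_div_factorial (x : ℝ) : HasSum (fun n ↦ x ^ n / n !) (exp x) := by
  rw [exp_eq_exp_ℝ]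
  exact NormedSpace.expSeries_div_hasSum_exp x

lemma mul_exp_one_sub_lt_one {x : ℝ} (h1 : x ≠ 1) : x * exp (1 - x) < 1 := by
  calc x * exp (1 - x) < exp (x - 1) * exp (1 - x) := by
        gcongr
        linarith [add_one_lt_exp (sub_ne_zero.mpr h1)]
    _ = 1 := by rw [← exp_add]; simp

lemma exp_neg_mul_mul_pow_mul_exp (N : ℕ) (x : ℝ) :
    exp (-(N * x)) * (x ^ N * exp N) = (x * exp (1 - x)) ^ N := by
  rw [mul_pow, ← exp_nat_mul, mul_left_comm, ← exp_add]
  ring_nf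

noncomputable def truncExpRatio (N : ℕ) (x : ℝ) : ℝ :=
  exp (-(N * x)) * ∑ n ∈ range N, (N * x) ^ n / n !

lemma ginibreOnePoint_eq_truncExpRatio (N : ℕ) (z : ℂ) :
    ginibreOnePoint N z = π⁻¹ * truncExpRatio N (‖z‖ ^ 2) :=
  mul_assoc _ _ _

section truncExpRatio

variable {x : ℝ}

lemma truncExpRatio_nonneg (N : ℕ) (hx : 0 ≤ x) : 0 ≤ truncExpRatio N x :=
  mul_nonneg (exp_pos _).le (sum_nonneg fun _ _ ↦ by positivity)

lemma truncExpRatio_le_one (N : ℕ) (hx : 0 ≤ x) : truncExpRatio N x ≤ 1 := by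
  calc truncExpRatio N x ≤ exp (-(N * x)) * exp (N * x) := by
        unfold truncExpRatio
        gcongr
        exact sum_le_exp_of_nonneg (by positivity) N
    _ = 1 := by rw [← exp_add]; simp

lemma mul_pow_div_factorial_le {a : ℝ} (ha : 0 ≤ a) {m n : ℕ} (h : x ^ n ≤ x ^ m) :
    (a * x) ^ n / n ! ≤ x ^ m * (a ^ n / n !) := by
  rw [mul_pow, mul_comm, mul_div_assoc]
  exact mul_le_mul_of_nonneg_right h (by positivity)

lemma sum_range_pow_div_factorial_le (N : ℕ) (hx : 1 ≤ x) :
    ∑ n ∈ range N, (N * x) ^ n / n ! ≤ x ^ N * exp N :=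
  calc ∑ n ∈ range N, (N * x) ^ n / n ! ≤ ∑ n ∈ range N, x ^ N * ((N : ℝ) ^ n / n !) := by
        refine sum_le_sum fun n hn ↦ mul_pow_div_factorial_le N.cast_nonneg ?_
        exact pow_le_pow_right₀ hx (mem_range.mp hn).le
    _ ≤ x ^ N * exp N := by
        rw [← mul_sum]
        gcongr
        exact sum_le_exp_of_nonneg N.cast_nonneg N

lemma exp_sub_sum_range_pow_div_factorial_le (N : ℕ) (hx₀ : 0 ≤ x) (hx₁ : x ≤ 1) :
    exp (N * x) - ∑ n ∈ range N, (N * x) ^ n / n ! ≤ x ^ N * exp N := by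
  have htail := (hasSum_nat_add_iff' N).mpr (hasSum_pow_div_factorial (N * x))
  have hdom := ((hasSum_nat_add_iff' N).mpr (hasSum_pow_div_factorial (N : ℝ))).mul_left (x ^ N)
  refine (hasSum_le (fun k ↦ ?_) htail hdom).trans ?_
  · exact mul_pow_div_factorial_le N.cast_nonneg (pow_le_pow_of_le_one hx₀ hx₁ (N.le_add_left k))
  · gcongr
    exact sub_le_self _ (sum_nonneg fun _ _ ↦ by positivity)

lemma truncExpRatio_le_pow (N : ℕ) (hx : 1 ≤ x) :
    truncExpRatio N x ≤ (x * exp (1 - x)) ^ N := by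
  rw [← exp_neg_mul_mul_pow_mul_exp]
  exact mul_le_mul_of_nonneg_left (sum_range_pow_div_factorial_le N hx) (exp_pos _).le

lemma one_sub_pow_le_truncExpRatio (N : ℕ) (hx₀ : 0 ≤ x) (hx₁ : x ≤ 1) :
    1 - (x * exp (1 - x)) ^ N ≤ truncExpRatio N x := by
  have h := mul_le_mul_of_nonneg_left (exp_sub_sum_range_pow_div_factorial_le N hx₀ hx₁)
    (exp_pos (-(N * x))).le
  rw [exp_neg_mul_mul_pow_mul_exp, mul_sub, ← exp_add, neg_add_cancel, exp_zero] at h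
  unfold truncExpRatio
  linarith

lemma tendsto_truncExpRatio_of_lt_one (hx₀ : 0 ≤ x) (hx₁ : x < 1) :
    Tendsto (truncExpRatio · x) atTop (𝓝 1) := by
  have hpow := tendsto_pow_atTop_nhds_zero_of_lt_one (by positivity)
    (mul_exp_one_sub_lt_one hx₁.ne)
  refine tendsto_of_tendsto_of_tendsto_of_le_of_le (by simpa using hpow.const_sub 1)
    tendsto_const_nhds (fun N ↦ one_sub_pow_le_truncExpRatio N hx₀ hx₁.le)
    (fun N ↦ truncExpRatio_le_one N hx₀)

lemma tendsto_truncExpRatio_of_one_lt (hx : 1 < x) :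
    Tendsto (truncExpRatio · x) atTop (𝓝 0) :=
  tendsto_of_tendsto_of_tendsto_of_le_of_le tendsto_const_nhds
    (tendsto_pow_atTop_nhds_zero_of_lt_one (by positivity)
      (mul_exp_one_sub_lt_one hx.ne'))
    (fun N ↦ truncExpRatio_nonneg N (by linarith)) (fun N ↦ truncExpRatio_le_pow N hx.le)

end truncExpRatio

lemma ginibreOnePoint_nonneg (N : ℕ) (z : ℂ) : 0 ≤ ginibreOnePoint N z := by
  rw [ginibreOnePoint_eq_truncExpRatio]
  exact mul_nonneg (by positivity) (truncExpRatio_nonneg N (by positivity))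

lemma ginibreOnePoint_le (N : ℕ) (z : ℂ) : ginibreOnePoint N z ≤ π⁻¹ := by
  rw [ginibreOnePoint_eq_truncExpRatio]
  exact mul_le_of_le_one_right (by positivity) (truncExpRatio_le_one N (by positivity))

lemma continuous_ginibreOnePoint (N : ℕ) : Continuous (ginibreOnePoint N) := by
  unfold ginibreOnePoint
  fun_prop

lemma tendsto_ginibreOnePoint {z : ℂ} (hz : ‖z‖ ≠ 1) :
    Tendsto (ginibreOnePoint · z) atTop (𝓝 ({z : ℂ | ‖z‖ ≤ 1}.indicator (fun _ ↦ π⁻¹) z)) := by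
  simp only [ginibreOnePoint_eq_truncExpRatio]
  rcases hz.lt_or_gt with hz | hz
  · rw [Set.indicator_of_mem (show z ∈ {z : ℂ | ‖z‖ ≤ 1} from hz.le)]
    simpa using (tendsto_truncExpRatio_of_lt_one (by positivity)
      (pow_lt_one₀ (norm_nonneg z) hz two_ne_zero)).const_mul π⁻¹
  · rw [Set.indicator_of_notMem (show z ∉ {z : ℂ | ‖z‖ ≤ 1} from not_le.mpr hz)]
    simpa using (tendsto_truncExpRatio_of_one_lt (one_lt_pow₀ hz two_ne_zero)).const_mul π⁻¹

/-- Weak convergence of the Ginibre one-point densities to the circular law: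
for every continuous compactly supported `f : ℂ → ℝ`,
`∫ f(z) R_N(z) d²z → π⁻¹ ∫_{|z| ≤ 1} f(z) d²z`. -/
theorem ginibre_onePoint_weak_circular_law (f : ℂ → ℝ)
    (hf : Continuous f) (hsupp : HasCompactSupport f) :
    Tendsto (fun N : ℕ => ∫ z : ℂ, f z * ginibreOnePoint N z)
      atTop (nhds (Real.pi⁻¹ * ∫ z in {z : ℂ | ‖z‖ ≤ 1}, f z)) := by
  have hdisk : MeasurableSet {z : ℂ | ‖z‖ ≤ 1} := measurableSet_le (by fun_prop) (by fun_prop)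
  have hcircle : ∀ᵐ z : ℂ, ‖z‖ ≠ 1 := by
    have hsphere : {z : ℂ | ‖z‖ = 1} = Metric.sphere 0 1 :=
      Set.ext fun _ ↦ mem_sphere_zero_iff_norm.symm
    simpa [ae_iff, hsphere] using Measure.addHaar_sphere (volume : Measure ℂ) 0 1
  have hlim := tendsto_integral_of_dominated_convergence
    (F := fun N z ↦ f z * ginibreOnePoint N z) (fun z ↦ |f z| * π⁻¹)
    (fun N ↦ (hf.mul (continuous_ginibreOnePoint N)).aestronglyMeasurable)
    ((hf.abs.integrable_of_hasCompactSupport hsupp.abs).mul_const _)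
    (fun N ↦ ae_of_all _ fun z ↦ by
      rw [norm_mul, norm_of_nonneg (ginibreOnePoint_nonneg N z), Real.norm_eq_abs]
      exact mul_le_mul_of_nonneg_left (ginibreOnePoint_le N z) (abs_nonneg _))
    (hcircle.mono fun z hz ↦ (tendsto_ginibreOnePoint hz).const_mul (f z))
  convert hlim using 2
  rw [← integral_const_mul, ← integral_indicator hdisk]
  congr 1 with z
  by_cases hz : ‖z‖ ≤ 1 <;> simp [hz, mul_comm]
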